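/- The group presented by ⟨t_1, t_2, t_3 | t_i^2 = (t_1 t_2)^3 = (t_2 t_3)^4 = (t_1 t_3)^4 = e, (t_1 t_2 t_3 t_2)^2 = e⟩ is isomorphic to the Weyl group of type B_3, of order 48. -/

import Mathlib

/-!
The assignments `t₁ ↦ s₂, t₂ ↦ s₁, t₃ ↦ s₂s₃s₂` and `s₁ ↦ t₂, s₂ ↦ t₁, s₃ ↦ t₁t₃t₁` respect
the relations and are mutually inverse on generators. The relations that are not immediate follow
by conjugating with `s₁s₂` (resp. `t₁t₂`): for involutions `x, y` with `(xy)³ = e`, conjugation by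
`xy` sends `x` to `y` and `yzy` to `xzx`. It carries `s₁·s₂s₃s₂` to `s₂s₃`, the commuting pair
`(s₁, s₃)` to `(s₂, s₁s₂s₃s₂s₁)`, and the commuting pair `(t₁, t₂t₃t₂)` to `(t₂, t₁t₃t₁)`.
-/

namespace Stmt16

/-- The relators of the group `⟨t₁,t₂,t₃ ∣ tᵢ² = (t₁t₂)³ = (t₂t₃)⁴ = (t₁t₃)⁴ = e,
(t₁t₂t₃t₂)² = e⟩`. -/
def rels : Set (FreeGroup (Fin 3)) :=
  let a := FreeGroup.of (0 : Fin 3)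
  let b := FreeGroup.of (1 : Fin 3)
  let c := FreeGroup.of (2 : Fin 3)
  {a ^ 2, b ^ 2, c ^ 2, (a * b) ^ 3, (b * c) ^ 4, (a * c) ^ 4, (a * (b * c * b)) ^ 2}

/-- The Coxeter matrix of type `B₃`. -/
def MB3 : CoxeterMatrix (Fin 3) where
  M := !![1, 3, 2; 3, 1, 4; 2, 4, 1]
  isSymm := by decide
  diagonal := by decide
  off_diagonal := by intro i i'; fin_cases i <;> fin_cases i' <;> simp

section Involutions

variable {G : Type*} [Group G] {x y z : G}

lemma inv_eq_self_of_sq_eq_one (hx : x ^ 2 = 1) : x⁻¹ = x :=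
  inv_eq_of_mul_eq_one_right (by rwa [← sq])

lemma mul_mul_cancel_left_of_sq_eq_one (hx : x ^ 2 = 1) (w : G) : x * (x * w) = w := by
  rw [← mul_assoc, ← sq, hx, one_mul]

lemma pow_mul_comm_eq_one {n : ℕ} (h : (x * y) ^ n = 1) : (y * x) ^ n = 1 := by
  have := conj_pow (a := y) (b := x * y) (i := n)
  rwa [h, mul_one, mul_inv_cancel, mul_assoc, mul_assoc, mul_inv_cancel, mul_one] at this

lemma sq_conj_eq_one (hx : x ^ 2 = 1) (hz : z ^ 2 = 1) : (x * z * x) ^ 2 = 1 := by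
  nth_rw 2 [← inv_eq_self_of_sq_eq_one hx]
  rw [conj_pow, hz, mul_one, mul_inv_cancel]

lemma sq_mul_eq_one_iff_commute (hx : x ^ 2 = 1) (hy : y ^ 2 = 1) :
    (x * y) ^ 2 = 1 ↔ Commute x y := by
  rw [sq, mul_eq_one_iff_eq_inv, mul_inv_rev, inv_eq_self_of_sq_eq_one hx,
    inv_eq_self_of_sq_eq_one hy]
  rfl

lemma conj_mul_apply_left_of_pow_three (hx : x ^ 2 = 1) (hy : y ^ 2 = 1)
    (h : (x * y) ^ 3 = 1) : MulAut.conj (x * y) x = y := by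
  have hxyxyxy : x * y * x * (y * x) * y = 1 := by
    rw [← h, pow_three]; simp only [mul_assoc]
  rw [MulAut.conj_apply, mul_inv_rev, inv_eq_self_of_sq_eq_one hx, inv_eq_self_of_sq_eq_one hy,
    eq_inv_of_mul_eq_one_left hxyxyxy, inv_eq_self_of_sq_eq_one hy]

lemma mul_conj_mul_of_sq_eq_one (hx : x ^ 2 = 1) : x * (x * z * x) * x = z := by
  simp only [mul_assoc, mul_mul_cancel_left_of_sq_eq_one hx]
  rw [← sq, hx, mul_one]

lemma conj_mul_apply_conj (hx : x ^ 2 = 1) (hy : y ^ 2 = 1) :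
    MulAut.conj (x * y) (y * z * y) = x * z * x := by
  rw [MulAut.conj_apply, mul_inv_rev, inv_eq_self_of_sq_eq_one hx, inv_eq_self_of_sq_eq_one hy]
  simp only [mul_assoc, mul_mul_cancel_left_of_sq_eq_one hy]

end Involutions

section Triples

variable {G : Type*} [Group G]

structure IsRelsTriple (a b c : G) : Prop where
  sq_a : a ^ 2 = 1
  sq_b : b ^ 2 = 1
  sq_c : c ^ 2 = 1
  pow_ab : (a * b) ^ 3 = 1
  pow_bc : (b * c) ^ 4 = 1
  pow_ac : (a * c) ^ 4 = 1
  sq_a_bcb : (a * (b * c * b)) ^ 2 = 1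

structure IsB3Triple (p q r : G) : Prop where
  sq_p : p ^ 2 = 1
  sq_q : q ^ 2 = 1
  sq_r : r ^ 2 = 1
  pow_pq : (p * q) ^ 3 = 1
  pow_qr : (q * r) ^ 4 = 1
  sq_pr : (p * r) ^ 2 = 1

theorem IsRelsTriple.lift_eq_one {a b c : G} (h : IsRelsTriple a b c) :
    ∀ r ∈ rels, FreeGroup.lift ![a, b, c] r = 1 := by
  simp only [rels, Set.mem_insert_iff, Set.mem_singleton_iff, forall_eq_or_imp, forall_eq,
    map_pow, map_mul, FreeGroup.lift_apply_of]
  exact ⟨h.sq_a, h.sq_b, h.sq_c, h.pow_ab, h.pow_bc, h.pow_ac, h.sq_a_bcb⟩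

theorem IsB3Triple.isLiftable {p q r : G} (h : IsB3Triple p q r) : MB3.IsLiftable ![p, q, r] := by
  intro i j
  fin_cases i <;> fin_cases j <;>
    simp [MB3, ← sq, h.sq_p, h.sq_q, h.sq_r, h.pow_pq, h.pow_qr, h.sq_pr,
      pow_mul_comm_eq_one h.pow_pq, pow_mul_comm_eq_one h.pow_qr, pow_mul_comm_eq_one h.sq_pr]

theorem isB3Triple_simple {W : Type*} [Group W] (cs : CoxeterSystem MB3 W) :
    IsB3Triple (cs.simple 0) (cs.simple 1) (cs.simple 2) :=
  ⟨cs.simple_sq 0, cs.simple_sq 1, cs.simple_sq 2, cs.simple_mul_simple_pow 0 1,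
    cs.simple_mul_simple_pow 1 2, cs.simple_mul_simple_pow 0 2⟩

theorem isRelsTriple_of : IsRelsTriple (G := PresentedGroup rels) (.of 0) (.of 1) (.of 2) := by
  have h : ∀ r ∈ rels, PresentedGroup.mk rels r = 1 := fun _ => PresentedGroup.one_of_mem
  simp only [rels, Set.mem_insert_iff, Set.mem_singleton_iff, forall_eq_or_imp, forall_eq] at h
  obtain ⟨h1, h2, h3, h4, h5, h6, h7⟩ := h
  exact ⟨h1, h2, h3, h4, h5, h6, h7⟩

theorem IsRelsTriple.isB3Triple {a b c : G} (h : IsRelsTriple a b c) :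
    IsB3Triple b a (a * c * a) where
  sq_p := h.sq_b
  sq_q := h.sq_a
  sq_r := sq_conj_eq_one h.sq_a h.sq_c
  pow_pq := pow_mul_comm_eq_one h.pow_ab
  pow_qr := by
    simp only [mul_assoc, mul_mul_cancel_left_of_sq_eq_one h.sq_a]
    exact pow_mul_comm_eq_one h.pow_ac
  sq_pr := by
    have hcomm : Commute a (b * c * b) :=
      (sq_mul_eq_one_iff_commute h.sq_a (sq_conj_eq_one h.sq_b h.sq_c)).mp h.sq_a_bcb
    have := hcomm.map (MulAut.conj (a * b))
    rw [conj_mul_apply_left_of_pow_three h.sq_a h.sq_b h.pow_ab,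
      conj_mul_apply_conj h.sq_a h.sq_b] at this
    exact (sq_mul_eq_one_iff_commute h.sq_b (sq_conj_eq_one h.sq_a h.sq_c)).mpr this

theorem IsB3Triple.isRelsTriple {p q r : G} (h : IsB3Triple p q r) :
    IsRelsTriple q p (q * r * q) := by
  have hpr : Commute p r := (sq_mul_eq_one_iff_commute h.sq_p h.sq_r).mp h.sq_pr
  have hconj_p : MulAut.conj (p * q) p = q :=
    conj_mul_apply_left_of_pow_three h.sq_p h.sq_q h.pow_pq
  refine
    { sq_a := h.sq_q
      sq_b := h.sq_p
      sq_c := sq_conj_eq_one h.sq_q h.sq_r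
      pow_ab := pow_mul_comm_eq_one h.pow_pq
      pow_bc := ?pow_bc
      pow_ac := ?pow_ac
      sq_a_bcb := ?sq_a_bcb }
  case pow_bc =>
    have hconj : MulAut.conj (p * q) (p * (q * r * q)) = q * r := by
      rw [map_mul, hconj_p, conj_mul_apply_conj h.sq_p h.sq_q, hpr.eq, mul_assoc, ← sq, h.sq_p,
        mul_one]
    rw [← map_eq_one_iff _ (MulAut.conj (p * q)).injective, map_pow, hconj, h.pow_qr]
  case pow_ac =>
    simp only [mul_assoc, mul_mul_cancel_left_of_sq_eq_one h.sq_q]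
    exact pow_mul_comm_eq_one h.pow_qr
  case sq_a_bcb =>
    have hconj_r : MulAut.conj (p * q) r = p * (q * r * q) * p := by
      rw [MulAut.conj_apply, mul_inv_rev, inv_eq_self_of_sq_eq_one h.sq_p,
        inv_eq_self_of_sq_eq_one h.sq_q]
      simp only [mul_assoc]
    have := hpr.map (MulAut.conj (p * q))
    rw [hconj_p, hconj_r] at this
    exact (sq_mul_eq_one_iff_commute h.sq_q
      (sq_conj_eq_one h.sq_p (sq_conj_eq_one h.sq_q h.sq_r))).mpr this

end Triples

/-- The group `⟨t₁,t₂,t₃ ∣ tᵢ² = (t₁t₂)³ = (t₂t₃)⁴ = (t₁t₃)⁴ = e, (t₁t₂t₃t₂)² = e⟩` is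
isomorphic to the Weyl group of type `B₃` (of order 48). -/
theorem presentedGroup_iso_weylB3 :
    Nonempty (PresentedGroup rels ≃* MB3.Group) := by
  let cs := MB3.toCoxeterSystem
  have hW := (isB3Triple_simple cs).isRelsTriple
  have hP := isRelsTriple_of.isB3Triple
  let φ := PresentedGroup.toGroup hW.lift_eq_one
  let ψ := cs.lift ⟨_, hP.isLiftable⟩
  refine ⟨MonoidHom.toMulEquiv φ ψ ?_ ?_⟩
  · refine PresentedGroup.ext fun i => ?_
    fin_cases i <;> simp [φ, ψ, PresentedGroup.toGroup.of, cs.lift_apply_simple,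
      mul_conj_mul_of_sq_eq_one hP.sq_q]
  · refine cs.ext_simple fun i => ?_
    fin_cases i <;> simp [φ, ψ, PresentedGroup.toGroup.of, cs.lift_apply_simple,
      mul_conj_mul_of_sq_eq_one hW.sq_a]

end Stmt16
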